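/- Any minimally degenerate dephasing Lindbladian L on ℂ² can be written as Lρ = -i[H,ρ] - (γ/2)[√H,[√H,ρ]] for some traceless non-degenerate Hermitian H and some real γ ≥ 0, where √H = sgn(H)√|H|. -/
import Mathlib

open Matrix

/-- The rank-one operator `|ψ⟩⟨φ|` on `ℂ²`, as a matrix. -/
def ketbra (ψ φ : Fin 2 → ℂ) : Matrix (Fin 2) (Fin 2) ℂ :=
  Matrix.vecMulVec ψ (star φ)

/-- The Lindbladian `Lρ = -i[H,ρ] + Σ_α (Γ_α ρ Γ_α* - ½(Γ_α*Γ_α ρ + ρ Γ_α*Γ_α))`. -/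
noncomputable def lindblad {ι : Type*} [Fintype ι]
    (H : Matrix (Fin 2) (Fin 2) ℂ) (Γ : ι → Matrix (Fin 2) (Fin 2) ℂ)
    (ρ : Matrix (Fin 2) (Fin 2) ℂ) : Matrix (Fin 2) (Fin 2) ℂ :=
  -(Complex.I) • (H * ρ - ρ * H) +
    ∑ α, (Γ α * ρ * (Γ α)ᴴ
      - (1/2 : ℂ) • ((Γ α)ᴴ * Γ α * ρ + ρ * ((Γ α)ᴴ * Γ α)))

section Helpers

lemma ketbra_mul_ketbra (ψ φ ψ' φ' : Fin 2 → ℂ) :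
    ketbra ψ φ * ketbra ψ' φ' = (star φ ⬝ᵥ ψ') • ketbra ψ φ' := by
  ext i j
  simp only [ketbra, Matrix.mul_apply, Matrix.vecMulVec_apply, Matrix.smul_apply,
    dotProduct, Fin.sum_univ_two, Pi.star_apply, smul_eq_mul]
  ring

lemma ketbra_conjTranspose (ψ φ : Fin 2 → ℂ) : (ketbra ψ φ)ᴴ = ketbra φ ψ := by
  ext i j
  simp [ketbra, Matrix.conjTranspose_apply, Matrix.vecMulVec_apply, mul_comm]

lemma ketbra_complete (ψp ψm : Fin 2 → ℂ)
    (hpp : star ψp ⬝ᵥ ψp = 1) (hmm : star ψm ⬝ᵥ ψm = 1)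
    (hpm : star ψp ⬝ᵥ ψm = 0) (hmp : star ψm ⬝ᵥ ψp = 0) :
    ketbra ψp ψp + ketbra ψm ψm = 1 := by
  simp only [dotProduct, Fin.sum_univ_two, Pi.star_apply, Complex.star_def]
    at hpp hmm hpm hmp
  set U : Matrix (Fin 2) (Fin 2) ℂ := Matrix.of fun i j => if j = 0 then ψp i else ψm i with hU
  have hUU : Uᴴ * U = 1 := by
    ext i j
    fin_cases i <;> fin_cases j <;>
      simp [hU, Matrix.mul_apply, Matrix.conjTranspose_apply, Fin.sum_univ_two,
        Matrix.one_apply] <;>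
      first
        | linear_combination hpp
        | linear_combination hpm
        | linear_combination hmp
        | linear_combination hmm
  have hU2 : U * Uᴴ = 1 := mul_eq_one_comm.mpr hUU
  rw [← hU2]
  ext i j
  simp [ketbra, Matrix.add_apply, Matrix.vecMulVec_apply, Matrix.mul_apply,
    Matrix.conjTranspose_apply, Fin.sum_univ_two, hU]

variable {Pp Pm : Matrix (Fin 2) (Fin 2) ℂ}

lemma block_decomp (ρ : Matrix (Fin 2) (Fin 2) ℂ) (hone : Pp + Pm = 1) :
    ρ = Pp * (ρ * Pp) + Pp * (ρ * Pm) + Pm * (ρ * Pp) + Pm * (ρ * Pm) := by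
  calc ρ = (Pp + Pm) * (ρ * (Pp + Pm)) := by rw [hone]; simp
  _ = _ := by noncomm_ring

lemma block_comm (ρ : Matrix (Fin 2) (Fin 2) ℂ)
    (hPp2 : Pp * Pp = Pp) (hPm2 : Pm * Pm = Pm)
    (hpm : Pp * Pm = 0) (hmp : Pm * Pp = 0)
    (hone : Pp + Pm = 1) (p q : ℂ) :
    (p • Pp + q • Pm) * ρ - ρ * (p • Pp + q • Pm)
    = (p - q) • (Pp * (ρ * Pm)) + (q - p) • (Pm * (ρ * Pp)) := by
  have h1 : ∀ x : Matrix (Fin 2) (Fin 2) ℂ, Pp * (Pp * x) = Pp * x := fun x => by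
    rw [← Matrix.mul_assoc, hPp2]
  have h2 : ∀ x : Matrix (Fin 2) (Fin 2) ℂ, Pm * (Pm * x) = Pm * x := fun x => by
    rw [← Matrix.mul_assoc, hPm2]
  have h3 : ∀ x : Matrix (Fin 2) (Fin 2) ℂ, Pp * (Pm * x) = 0 := fun x => by
    rw [← Matrix.mul_assoc, hpm, Matrix.zero_mul]
  have h4 : ∀ x : Matrix (Fin 2) (Fin 2) ℂ, Pm * (Pp * x) = 0 := fun x => by
    rw [← Matrix.mul_assoc, hmp, Matrix.zero_mul]
  conv_lhs => rw [block_decomp ρ hone]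
  simp only [mul_add, add_mul, smul_mul_assoc, mul_smul_comm, Matrix.mul_assoc,
    h1, h2, h3, h4, hPp2, hPm2, hpm, hmp, Matrix.mul_zero, Matrix.zero_mul,
    smul_zero, add_zero, zero_add]
  module

lemma block_comm2 (ρ : Matrix (Fin 2) (Fin 2) ℂ)
    (hPp2 : Pp * Pp = Pp) (hPm2 : Pm * Pm = Pm)
    (hpm : Pp * Pm = 0) (hmp : Pm * Pp = 0)
    (hone : Pp + Pm = 1) (p q : ℂ) :
    (p • Pp + q • Pm) * ((p • Pp + q • Pm) * ρ - ρ * (p • Pp + q • Pm))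
      - ((p • Pp + q • Pm) * ρ - ρ * (p • Pp + q • Pm)) * (p • Pp + q • Pm)
    = ((p - q) * (p - q)) • (Pp * (ρ * Pm)) + ((q - p) * (q - p)) • (Pm * (ρ * Pp)) := by
  rw [block_comm ρ hPp2 hPm2 hpm hmp hone p q]
  have h1 : ∀ x : Matrix (Fin 2) (Fin 2) ℂ, Pp * (Pp * x) = Pp * x := fun x => by
    rw [← Matrix.mul_assoc, hPp2]
  have h2 : ∀ x : Matrix (Fin 2) (Fin 2) ℂ, Pm * (Pm * x) = Pm * x := fun x => by
    rw [← Matrix.mul_assoc, hPm2]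
  have h3 : ∀ x : Matrix (Fin 2) (Fin 2) ℂ, Pp * (Pm * x) = 0 := fun x => by
    rw [← Matrix.mul_assoc, hpm, Matrix.zero_mul]
  have h4 : ∀ x : Matrix (Fin 2) (Fin 2) ℂ, Pm * (Pp * x) = 0 := fun x => by
    rw [← Matrix.mul_assoc, hmp, Matrix.zero_mul]
  simp only [mul_add, add_mul, smul_mul_assoc, mul_smul_comm, Matrix.mul_assoc,
    h1, h2, h3, h4, hPp2, hPm2, hpm, hmp, Matrix.mul_zero, Matrix.zero_mul,
    smul_zero, add_zero, zero_add, smul_add, smul_smul]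
  module

lemma block_diss (ρ : Matrix (Fin 2) (Fin 2) ℂ)
    (hPpH : Ppᴴ = Pp) (hPmH : Pmᴴ = Pm)
    (hPp2 : Pp * Pp = Pp) (hPm2 : Pm * Pm = Pm)
    (hpm : Pp * Pm = 0) (hmp : Pm * Pp = 0)
    (hone : Pp + Pm = 1) (x y : ℂ) :
    (x • Pp + y • Pm) * ρ * (x • Pp + y • Pm)ᴴ
      - (1/2 : ℂ) • ((x • Pp + y • Pm)ᴴ * (x • Pp + y • Pm) * ρ
        + ρ * ((x • Pp + y • Pm)ᴴ * (x • Pp + y • Pm)))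
    = (x * star y - (1/2) * (star x * x + star y * y)) • (Pp * (ρ * Pm))
      + (star x * y - (1/2) * (star x * x + star y * y)) • (Pm * (ρ * Pp)) := by
  have h1 : ∀ x : Matrix (Fin 2) (Fin 2) ℂ, Pp * (Pp * x) = Pp * x := fun x => by
    rw [← Matrix.mul_assoc, hPp2]
  have h2 : ∀ x : Matrix (Fin 2) (Fin 2) ℂ, Pm * (Pm * x) = Pm * x := fun x => by
    rw [← Matrix.mul_assoc, hPm2]
  have h3 : ∀ x : Matrix (Fin 2) (Fin 2) ℂ, Pp * (Pm * x) = 0 := fun x => by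
    rw [← Matrix.mul_assoc, hpm, Matrix.zero_mul]
  have h4 : ∀ x : Matrix (Fin 2) (Fin 2) ℂ, Pm * (Pp * x) = 0 := fun x => by
    rw [← Matrix.mul_assoc, hmp, Matrix.zero_mul]
  rw [conjTranspose_add, conjTranspose_smul, conjTranspose_smul, hPpH, hPmH]
  conv_lhs => rw [block_decomp ρ hone]
  simp only [mul_add, add_mul, smul_mul_assoc, mul_smul_comm, Matrix.mul_assoc,
    h1, h2, h3, h4, hPp2, hPm2, hpm, hmp, Matrix.mul_zero, Matrix.zero_mul,
    smul_zero, add_zero, zero_add, smul_add, smul_smul]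
  module

lemma term_re_nonpos (a b : ℂ) :
    (a * star b - (1/2 : ℂ) * (star a * a + star b * b)).re ≤ 0 := by
  simp only [Complex.sub_re, Complex.mul_re, Complex.add_re, Complex.add_im,
    Complex.mul_im, Complex.star_def, Complex.conj_re, Complex.conj_im,
    Complex.one_re, Complex.one_im, Complex.div_re, Complex.div_im,
    Complex.re_ofNat, Complex.im_ofNat, Complex.normSq_apply]
  nlinarith [sq_nonneg (a.re - b.re), sq_nonneg (a.im - b.im)]

lemma star_term (a b : ℂ) :
    star (a * star b - (1/2 : ℂ) * (star a * a + star b * b))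
    = star a * b - (1/2 : ℂ) * (star a * a + star b * b) := by
  simp only [star_sub, star_mul', star_star, star_add, star_div₀, star_one, star_ofNat]
  ring

lemma sign_sqrt_sq (κ : ℝ) (hκ : κ ≠ 0) :
    ((Real.sign κ * Real.sqrt |κ| : ℝ) : ℂ) * ((Real.sign κ * Real.sqrt |κ| : ℝ) : ℂ)
    = ((|κ| : ℝ) : ℂ) := by
  rw [← Complex.ofReal_mul]
  congr 1
  have hs : Real.sign κ * Real.sign κ = 1 := by
    rcases hκ.lt_or_gt with h | h
    · rw [Real.sign_of_neg h]; norm_num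
    · rw [Real.sign_of_pos h]; norm_num
  have h2 : Real.sqrt |κ| * Real.sqrt |κ| = |κ| := Real.mul_self_sqrt (abs_nonneg κ)
  nlinarith [h2, hs]

end Helpers

/-- Any minimally degenerate dephasing Lindbladian on `ℂ²` has the form
`Lρ = -i[H,ρ] - (γ/2)[√H,[√H,ρ]]` with `H` a traceless non-degenerate Hermitian
matrix (i.e. `H = κ(P⁺' - P⁻')`, `κ ≠ 0`, for orthogonal rank-one projections summing
to `1`) and `γ ≥ 0`; here `√H = sgn(κ)√|κ| (P⁺' - P⁻')`. -/
theorem dephasing_lindbladian_normal_form {ι : Type*} [Fintype ι]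
    (ψp ψm : Fin 2 → ℂ)
    (hpp : star ψp ⬝ᵥ ψp = 1) (hmm : star ψm ⬝ᵥ ψm = 1)
    (hpm : star ψp ⬝ᵥ ψm = 0) (hmp : star ψm ⬝ᵥ ψp = 0)
    (ep em : ℝ) (hee : ep ≠ em) (fp fm : ι → ℂ)
    (Htilde : Matrix (Fin 2) (Fin 2) ℂ)
    (hH : Htilde = (ep : ℂ) • ketbra ψp ψp + (em : ℂ) • ketbra ψm ψm)
    (Γ : ι → Matrix (Fin 2) (Fin 2) ℂ)
    (hΓ : ∀ α, Γ α = fp α • ketbra ψp ψp + fm α • ketbra ψm ψm)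
    -- minimal degeneracy: the eigenvalue of `L` on the coherence has nonzero
    -- imaginary part
    (hmin : (-Complex.I * ((ep : ℂ) - (em : ℂ))
      + ∑ α, (fp α * star (fm α)
        - (1/2 : ℂ) * (star (fp α) * fp α + star (fm α) * fm α))).im ≠ 0) :
    ∃ (κ γ : ℝ) (Pp Pm : Matrix (Fin 2) (Fin 2) ℂ),
      κ ≠ 0 ∧ 0 ≤ γ ∧
      Ppᴴ = Pp ∧ Pp * Pp = Pp ∧ Pmᴴ = Pm ∧ Pm * Pm = Pm ∧
      Pp * Pm = 0 ∧ Pp + Pm = 1 ∧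
      ∀ ρ : Matrix (Fin 2) (Fin 2) ℂ,
        lindblad Htilde Γ ρ =
          -(Complex.I) • (((κ : ℂ) • (Pp - Pm)) * ρ - ρ * ((κ : ℂ) • (Pp - Pm)))
          - ((γ : ℂ)/2) •
            (let S : Matrix (Fin 2) (Fin 2) ℂ :=
              ((Real.sign κ * Real.sqrt |κ| : ℝ) : ℂ) • (Pp - Pm);
             S * (S * ρ - ρ * S) - (S * ρ - ρ * S) * S) := by
  set Pp := ketbra ψp ψp with hPpdef
  set Pm := ketbra ψm ψm with hPmdef
  have hPpH : Ppᴴ = Pp := ketbra_conjTranspose ψp ψp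
  have hPmH : Pmᴴ = Pm := ketbra_conjTranspose ψm ψm
  have hPp2 : Pp * Pp = Pp := by
    rw [hPpdef, ketbra_mul_ketbra, hpp, one_smul]
  have hPm2 : Pm * Pm = Pm := by
    rw [hPmdef, ketbra_mul_ketbra, hmm, one_smul]
  have hpm0 : Pp * Pm = 0 := by
    rw [hPpdef, hPmdef, ketbra_mul_ketbra, hpm, zero_smul]
  have hmp0 : Pm * Pp = 0 := by
    rw [hPpdef, hPmdef, ketbra_mul_ketbra, hmp, zero_smul]
  have hone : Pp + Pm = 1 := ketbra_complete ψp ψm hpp hmm hpm hmp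
  set z : ℂ := -Complex.I * ((ep : ℂ) - (em : ℂ))
      + ∑ α, (fp α * star (fm α)
        - (1/2 : ℂ) * (star (fp α) * fp α + star (fm α) * fm α)) with hzdef
  have hre : z.re ≤ 0 := by
    rw [hzdef, Complex.add_re, Complex.re_sum]
    have h0 : (-Complex.I * ((ep : ℂ) - (em : ℂ))).re = 0 := by simp
    rw [h0, zero_add]
    exact Finset.sum_nonpos fun α _ => term_re_nonpos _ _
  set κ : ℝ := -z.im / 2 with hκdef
  have hκ : κ ≠ 0 := div_ne_zero (neg_ne_zero.mpr hmin) two_ne_zero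
  have habs : (0:ℝ) < |κ| := abs_pos.mpr hκ
  set γ : ℝ := -z.re / (2 * |κ|) with hγdef
  have hγ : 0 ≤ γ := div_nonneg (neg_nonneg.mpr hre) (by positivity)
  have hγκ : γ * (2 * |κ|) = -z.re := div_mul_cancel₀ _ (by positivity)
  refine ⟨κ, γ, Pp, Pm, hκ, hγ, hPpH, hPp2, hPmH, hPm2, hpm0, hone, ?_⟩
  intro ρ
  set s : ℂ := ((Real.sign κ * Real.sqrt |κ| : ℝ) : ℂ) with hsdef
  -- scalar facts
  have hss : s * s = ((|κ| : ℝ) : ℂ) := sign_sqrt_sq κ hκ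
  have him : z.im = -(2 * κ) := by rw [hκdef]; ring
  have hrev : z.re = -(γ * (2 * |κ|)) := by rw [hγκ]; ring
  have hz1 : z = -Complex.I * (2 * (κ : ℂ)) - 2 * (γ : ℂ) * (s * s) := by
    rw [hss]
    apply Complex.ext
    · simp only [Complex.sub_re, Complex.mul_re, Complex.neg_re, Complex.I_re,
        Complex.mul_im, Complex.neg_im, Complex.I_im, Complex.ofReal_re,
        Complex.ofReal_im, Complex.re_ofNat, Complex.im_ofNat]
      rw [hrev]; ring
    · simp only [Complex.sub_im, Complex.mul_im, Complex.mul_re, Complex.neg_re,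
        Complex.I_re, Complex.neg_im, Complex.I_im, Complex.ofReal_re,
        Complex.ofReal_im, Complex.re_ofNat, Complex.im_ofNat]
      rw [him]; ring
  have hz2 : star z = Complex.I * (2 * (κ : ℂ)) - 2 * (γ : ℂ) * (s * s) := by
    rw [hz1]
    simp only [star_sub, star_mul', star_neg, Complex.star_def, Complex.conj_I,
      Complex.conj_ofReal, star_ofNat, hsdef]
    push_cast
    ring
  have hstarz : ∑ α, (star (fp α) * fm α
        - (1/2 : ℂ) * (star (fp α) * fp α + star (fm α) * fm α))
      = star z - Complex.I * ((ep : ℂ) - (em : ℂ)) := by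
    have : star z = Complex.I * ((ep : ℂ) - (em : ℂ))
        + ∑ α, (star (fp α) * fm α
          - (1/2 : ℂ) * (star (fp α) * fp α + star (fm α) * fm α)) := by
      rw [hzdef, star_add, star_sum]
      congr 1
      · simp only [star_mul', star_neg, Complex.star_def, Complex.conj_I, map_sub,
          Complex.conj_ofReal]
        ring
      · exact Finset.sum_congr rfl fun α _ => star_term _ _
    rw [this]; ring
  have hcp : ∑ α, (fp α * star (fm α)
        - (1/2 : ℂ) * (star (fp α) * fp α + star (fm α) * fm α))
      = z + Complex.I * ((ep : ℂ) - (em : ℂ)) := by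
    rw [hzdef]; ring
  -- main computation
  have hκsplit : (κ : ℂ) • (Pp - Pm) = (κ : ℂ) • Pp + (-(κ : ℂ)) • Pm := by module
  have hssplit : s • (Pp - Pm) = s • Pp + (-s) • Pm := by module
  simp only [lindblad, hH, hΓ]
  rw [Finset.sum_congr rfl fun α _ =>
    block_diss ρ hPpH hPmH hPp2 hPm2 hpm0 hmp0 hone (fp α) (fm α)]
  rw [Finset.sum_add_distrib, ← Finset.sum_smul, ← Finset.sum_smul, hcp, hstarz]
  rw [block_comm ρ hPp2 hPm2 hpm0 hmp0 hone ((ep : ℂ)) ((em : ℂ))]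
  conv_rhs =>
    rw [hκsplit, hssplit,
      block_comm ρ hPp2 hPm2 hpm0 hmp0 hone ((κ : ℂ)) (-(κ : ℂ)),
      block_comm2 ρ hPp2 hPm2 hpm0 hmp0 hone s (-s)]
  match_scalars
  · linear_combination hz1
  · linear_combination hz2
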